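/- arXiv:math/0504072 — 3 statements merged into one kernel-verified Lean document; each statement's English description precedes it below -/
import Mathlib

section
/- Let r ≥ 2 be an integer, b an integer coprime to r, and l an integer with 0 ≤ l ≤ r−1. For an integer m define c(m) = −[m]_r·(r²−1)/(12r) + ∑_{j=1}^{[m]_r − 1} [b·j]_r·(r − [b·j]_r)/(2r), a rational number. Then for every integer n ≥ 0: c(l−n) − c(−n) = (r−l)·(r²−1)/(12r) − ∑_{i=n+1}^{n+r−l} [b·i]_r·(r − [b·i]_r)/(2r). -/
private def gg (r : ℕ) (k : ℤ) : ℚ := (k : ℚ) * ((r : ℚ) - (k : ℚ)) / (2 * r)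

private def FF (r : ℕ) (b : ℤ) (i : ℤ) : ℚ := gg r ((b * i) % (r : ℤ))

private lemma Icc_eq_Ico (a b : ℤ) : Finset.Icc a (b - 1) = Finset.Ico a b := by
  ext x; simp only [Finset.mem_Icc, Finset.mem_Ico]; omega

private lemma sum_Ico_cons (f : ℤ → ℚ) {a b c : ℤ} (h1 : a ≤ b) (h2 : b ≤ c) :
    ∑ i ∈ Finset.Ico a b, f i + ∑ i ∈ Finset.Ico b c, f i = ∑ i ∈ Finset.Ico a c, f i := by
  rw [← Finset.sum_union (Finset.Ico_disjoint_Ico_consecutive a b c),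
    Finset.Ico_union_Ico_eq_Ico h1 h2]

private lemma mul_emod_emod (r a c : ℤ) : (a * (c % r)) % r = (a * c) % r := by
  conv_rhs => rw [Int.mul_emod a c]
  rw [Int.mul_emod a (c % r), Int.emod_emod_of_dvd _ dvd_rfl]

private lemma FF_sub_dvd (r : ℕ) (b : ℤ) {m : ℤ} (i : ℤ) (h : (r : ℤ) ∣ m) :
    FF r b (i - m) = FF r b i := by
  obtain ⟨k, rfl⟩ := h
  unfold FF
  congr 1
  have h1 : b * (i - (r : ℤ) * k) = b * i + (r : ℤ) * (-(b * k)) := by ring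
  rw [h1, Int.add_mul_emod_self_left]

private lemma FF_add_dvd (r : ℕ) (b : ℤ) {m : ℤ} (i : ℤ) (h : (r : ℤ) ∣ m) :
    FF r b (i + m) = FF r b i := by
  simpa using (FF_sub_dvd r b (i + m) h).symm

private lemma FF_neg (r : ℕ) (hr : 0 < r) (b : ℤ) (i : ℤ) : FF r b (-i) = FF r b i := by
  have hrz : (0 : ℤ) < r := by exact_mod_cast hr
  have h1 : b * (-i) = -(b * i) := by ring
  unfold FF
  rw [h1]
  set x := b * i % (r : ℤ) with hx
  have hx0 : 0 ≤ x := Int.emod_nonneg _ (by omega)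
  have hxr : x < r := Int.emod_lt_of_pos _ hrz
  have h2 : (-(b * i)) % (r : ℤ) = (-x) % r := by
    conv_lhs => rw [show -(b * i) = -x + (r : ℤ) * (-(b * i / r)) by
      rw [hx]; have := Int.mul_ediv_add_emod (b * i) (r : ℤ); linarith]
    rw [Int.add_mul_emod_self_left]
  rw [h2]
  rcases eq_or_lt_of_le hx0 with h | h
  · rw [← h]; norm_num
  · have h3 : (-x) % (r : ℤ) = r - x := by
      rw [show -x = (r - x) + (r : ℤ) * (-1) by ring, Int.add_mul_emod_self_left,
        Int.emod_eq_of_lt (by omega) (by omega)]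
    rw [h3]
    unfold gg
    push_cast
    ring

private lemma FF_zero (r : ℕ) (b : ℤ) : FF r b 0 = 0 := by
  simp [FF, gg]

private lemma sum_range_cast (m : ℕ) :
    ∑ i ∈ Finset.range m, (i : ℚ) = m * (m - 1) / 2 := by
  induction m with
  | zero => simp
  | succ k ih => rw [Finset.sum_range_succ, ih]; push_cast; ring

private lemma sum_range_sq (m : ℕ) :
    ∑ i ∈ Finset.range m, (i : ℚ) ^ 2 = m * (m - 1) * (2 * m - 1) / 6 := by
  induction m with
  | zero => simp
  | succ k ih => rw [Finset.sum_range_succ, ih]; push_cast; ring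

private lemma gg_sum (r : ℕ) (hr : 0 < r) :
    ∑ k ∈ Finset.Ico (0 : ℤ) (r : ℤ), gg r k = ((r : ℚ) ^ 2 - 1) / 12 := by
  have h1 : ∑ k ∈ Finset.Ico (0 : ℤ) (r : ℤ), gg r k = ∑ m ∈ Finset.range r, gg r (m : ℤ) := by
    refine Finset.sum_nbij' (fun k => k.toNat) (fun m => (m : ℤ)) ?_ ?_ ?_ ?_ ?_
    · intro a ha; simp only [Finset.mem_Ico] at ha; simp only [Finset.mem_range]; omega
    · intro a ha; simp only [Finset.mem_range] at ha; simp only [Finset.mem_Ico]; omega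
    · intro a ha; simp only [Finset.mem_Ico] at ha
      show ((a.toNat : ℤ)) = a
      exact Int.toNat_of_nonneg ha.1
    · intro a _; simp
    · intro a ha; simp only [Finset.mem_Ico] at ha
      show gg r (a : ℤ) = gg r ((a.toNat : ℕ) : ℤ)
      rw [Int.toNat_of_nonneg ha.1]
  rw [h1]
  have h2 : ∀ m : ℕ, gg r (m : ℤ) = ((m : ℚ) * r - (m : ℚ) ^ 2) / (2 * r) := by
    intro m; unfold gg; push_cast; ring
  simp only [h2]
  rw [← Finset.sum_div, Finset.sum_sub_distrib, ← Finset.sum_mul, sum_range_cast, sum_range_sq]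
  have hrq : (r : ℚ) ≠ 0 := by positivity
  field_simp
  ring

private lemma FF_sum (r : ℕ) (hr : 0 < r) (b : ℤ) (hb : IsCoprime b (r : ℤ)) :
    ∑ j ∈ Finset.Ico (0 : ℤ) (r : ℤ), FF r b j = ((r : ℚ) ^ 2 - 1) / 12 := by
  have hrz : (0 : ℤ) < r := by exact_mod_cast hr
  obtain ⟨u, v, huv⟩ := hb
  have key : ∀ x : ℤ, 0 ≤ x → x < r → (u * ((b * x) % r)) % r = x := by
    intro x h0 h1
    rw [mul_emod_emod, show u * (b * x) = x + (r : ℤ) * (-(v * x)) by linear_combination x * huv,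
      Int.add_mul_emod_self_left, Int.emod_eq_of_lt h0 h1]
  have key2 : ∀ x : ℤ, 0 ≤ x → x < r → (b * ((u * x) % r)) % r = x := by
    intro x h0 h1
    rw [mul_emod_emod, show b * (u * x) = x + (r : ℤ) * (-(v * x)) by linear_combination x * huv,
      Int.add_mul_emod_self_left, Int.emod_eq_of_lt h0 h1]
  have h1 : ∑ j ∈ Finset.Ico (0 : ℤ) (r : ℤ), FF r b j
      = ∑ k ∈ Finset.Ico (0 : ℤ) (r : ℤ), gg r k := by
    refine Finset.sum_nbij' (fun j => (b * j) % r) (fun k => (u * k) % r) ?_ ?_ ?_ ?_ ?_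
    · intro a _; simp only [Finset.mem_Ico]
      exact ⟨Int.emod_nonneg _ (by omega), Int.emod_lt_of_pos _ hrz⟩
    · intro a _; simp only [Finset.mem_Ico]
      exact ⟨Int.emod_nonneg _ (by omega), Int.emod_lt_of_pos _ hrz⟩
    · intro a ha; simp only [Finset.mem_Ico] at ha; exact key a ha.1 ha.2
    · intro a ha; simp only [Finset.mem_Ico] at ha; exact key2 a ha.1 ha.2
    · intro a _; rfl
  rw [h1, gg_sum r hr]

/-- Let `r ≥ 2` be an integer, `b` coprime to `r`, and `0 ≤ l ≤ r − 1`.  For an integer `m`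
set `c(m) = −[m]_r·(r²−1)/(12r) + ∑_{j=1}^{[m]_r−1} [b·j]_r·(r−[b·j]_r)/(2r) ∈ ℚ`,
where `[a]_r` is the minimal nonnegative residue of `a` mod `r`.  Then for every `n ≥ 0`:
`c(l−n) − c(−n) = (r−l)(r²−1)/(12r) − ∑_{i=n+1}^{n+r−l} [b·i]_r·(r−[b·i]_r)/(2r)`. -/
theorem orbifold_RR_contribution_difference (r : ℕ) (hr : 2 ≤ r) (b l : ℤ)
    (hb : IsCoprime b (r : ℤ)) (hl0 : 0 ≤ l) (hl1 : l ≤ (r : ℤ) - 1)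
    (c : ℤ → ℚ)
    (hc : ∀ m : ℤ, c m =
      -((m % (r : ℤ) : ℤ) : ℚ) * ((r : ℚ) ^ 2 - 1) / (12 * r)
        + ∑ j ∈ Finset.Icc (1 : ℤ) (m % (r : ℤ) - 1),
            (((b * j) % (r : ℤ) : ℤ) : ℚ) * ((r : ℚ) - (((b * j) % (r : ℤ) : ℤ) : ℚ)) / (2 * r)) :
    ∀ n : ℤ, 0 ≤ n →
      c (l - n) - c (-n)
        = ((r : ℚ) - l) * ((r : ℚ) ^ 2 - 1) / (12 * r)
          - ∑ i ∈ Finset.Icc (n + 1) (n + r - l),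
              (((b * i) % (r : ℤ) : ℤ) : ℚ) * ((r : ℚ) - (((b * i) % (r : ℤ) : ℤ) : ℚ)) / (2 * r) := by
  intro n hn
  have hr1 : 0 < r := by omega
  have hrz : (0 : ℤ) < r := by exact_mod_cast hr1
  have hrq : (r : ℚ) ≠ 0 := by positivity
  set F : ℤ → ℚ := FF r b with hF
  -- replace the summands by F
  have hFrfl : ∀ j : ℤ,
      (((b * j) % (r : ℤ) : ℤ) : ℚ) * ((r : ℚ) - (((b * j) % (r : ℤ) : ℤ) : ℚ)) / (2 * r)
        = F j := fun j => rfl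
  set s : ℤ := (-n) % r with hs
  set t : ℤ := (l - n) % r with ht
  have hs0 : 0 ≤ s := Int.emod_nonneg _ (by omega)
  have hsr : s < r := Int.emod_lt_of_pos _ hrz
  have ht0 : 0 ≤ t := Int.emod_nonneg _ (by omega)
  have htr : t < r := Int.emod_lt_of_pos _ hrz
  have hts : t = (s + l) % r := by
    rw [ht, hs, Int.emod_add_emod]; congr 1; ring
  have hns : (r : ℤ) ∣ n + s := by
    have : (n + s) % r = 0 := by
      rw [hs, show n + (-n) % (r:ℤ) = (-n) % r + n by ring, Int.emod_add_emod]
      simp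
    exact Int.dvd_of_emod_eq_zero this
  -- the sums as Ico sums
  have hA : ∀ a : ℤ, 0 ≤ a →
      ∑ j ∈ Finset.Icc (1 : ℤ) (a - 1), F j = ∑ j ∈ Finset.Ico (0 : ℤ) a, F j := by
    intro a ha
    rw [Icc_eq_Ico]
    rcases eq_or_lt_of_le ha with h | h
    · rw [← h]; simp
    · rw [← sum_Ico_cons F (by omega : (0:ℤ) ≤ 1) (by omega : (1:ℤ) ≤ a)]
      have : Finset.Ico (0 : ℤ) 1 = {0} := by
        ext x; simp only [Finset.mem_Ico, Finset.mem_singleton]; omega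
      rw [this, Finset.sum_singleton, hF, FF_zero, zero_add]
  -- rewrite c values
  rw [hc (l - n), hc (-n)]
  simp only [hFrfl, ← hs, ← ht]
  rw [hA t ht0, hA s hs0]
  -- the RHS sum over Icc (n+1) (n+r-l) equals sum over Ico (s+l-r) s of F
  have hS2 : ∑ i ∈ Finset.Icc (n + 1) (n + r - l), F i
      = ∑ j ∈ Finset.Ico (s + l - r) s, F j := by
    refine Finset.sum_nbij' (fun i => n + s - i) (fun j => n + s - j) ?_ ?_ ?_ ?_ ?_
    · intro a ha; simp only [Finset.mem_Icc] at ha; simp only [Finset.mem_Ico]; omega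
    · intro a ha; simp only [Finset.mem_Ico] at ha; simp only [Finset.mem_Icc]; omega
    · intro a _; ring
    · intro a _; ring
    · intro a _
      show FF r b a = FF r b (n + s - a)
      rw [show n + s - a = -(a - (n + s)) by ring, FF_neg r hr1, FF_sub_dvd r b a hns]
  rw [hS2]
  -- case split
  rcases lt_or_ge (s + l) (r : ℤ) with hcase | hcase
  · -- t = s + l
    have htv : t = s + l := by rw [hts, Int.emod_eq_of_lt (by omega) hcase]
    -- split S2
    have hsplit : ∑ j ∈ Finset.Ico (s + l - r) s, F j
        = ∑ j ∈ Finset.Ico (s + l - r) (0:ℤ), F j + ∑ j ∈ Finset.Ico (0:ℤ) s, F j :=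
      (sum_Ico_cons F (by omega) hs0).symm
    have hshift : ∑ j ∈ Finset.Ico (s + l - r) (0:ℤ), F j
        = ∑ j ∈ Finset.Ico (s + l) (r : ℤ), F j := by
      refine Finset.sum_nbij' (fun j => j + r) (fun j => j - r) ?_ ?_ ?_ ?_ ?_
      · intro a ha; simp only [Finset.mem_Ico] at ha ⊢; omega
      · intro a ha; simp only [Finset.mem_Ico] at ha ⊢; omega
      · intro a _; ring
      · intro a _; ring
      · intro a _
        show FF r b a = FF r b (a + (r : ℤ))
        exact (FF_add_dvd r b a dvd_rfl).symm
    have hfull : ∑ j ∈ Finset.Ico (0:ℤ) s, F j + (∑ j ∈ Finset.Ico s t, F j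
        + ∑ j ∈ Finset.Ico (s+l) (r:ℤ), F j) = ((r : ℚ) ^ 2 - 1) / 12 := by
      rw [← htv, sum_Ico_cons F (by omega) (by omega),
        sum_Ico_cons F (by omega) (by omega), hF]
      exact FF_sum r hr1 b hb
    have hdiff : ∑ j ∈ Finset.Ico (0:ℤ) t, F j
        = ∑ j ∈ Finset.Ico (0:ℤ) s, F j + ∑ j ∈ Finset.Ico s t, F j :=
      (sum_Ico_cons F hs0 (by omega)).symm
    rw [hsplit, hshift, hdiff]
    have hcast : (t : ℚ) = (s : ℚ) + (l : ℚ) := by rw [htv]; push_cast; ring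
    rw [hcast]
    have h12 : ((r : ℚ) ^ 2 - 1) / 12 = (r : ℚ) * (((r:ℚ)^2 - 1) / (12 * r)) := by
      field_simp
    rw [h12] at hfull
    linear_combination hfull
  · -- t = s + l - r
    have htv : t = s + l - r := by
      have e : s + l = (s + l - r) + (r : ℤ) * 1 := by ring
      rw [hts, e, Int.add_mul_emod_self_left, Int.emod_eq_of_lt (by omega) (by omega)]
      omega
    have hdiff : ∑ j ∈ Finset.Ico (0:ℤ) s, F j
        = ∑ j ∈ Finset.Ico (0:ℤ) t, F j + ∑ j ∈ Finset.Ico t s, F j :=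
      (sum_Ico_cons F ht0 (by omega)).symm
    have heq : Finset.Ico (s + l - r) s = Finset.Ico t s := by rw [htv]
    rw [heq, hdiff]
    have hcast : (t : ℚ) = (s : ℚ) + (l : ℚ) - (r : ℚ) := by rw [htv]; push_cast; ring
    rw [hcast]
    ring
end

section
/- Let Q range over a finite index set, and for each Q let r_Q ≥ 2 be an integer, b_Q an integer coprime to r_Q, and l_Q an integer with 0 ≤ l_Q ≤ r_Q − 1. For an integer m set c_Q(m) = −[m]_{r_Q}·(r_Q²−1)/(12 r_Q) + ∑_{j=1}^{[m]_{r_Q} − 1} [b_Q·j]_{r_Q}·(r_Q − [b_Q·j]_{r_Q})/(2 r_Q) ∈ ℚ, and write σ_Q(i) = [b_Q·i]_{r_Q}·(r_Q − [b_Q·i]_{r_Q})/(2 r_Q). Then in ℚ⟦t⟧: ∑_{n≥0} ( ∑_Q ( c_Q(l_Q − n) − c_Q(−n) ) )·t^n = ∑_Q ( (r_Q − l_Q)·(r_Q²−1)/(12 r_Q) · (1−t)⁻¹ − (1−t^{r_Q})⁻¹ · ∑_{j=0}^{r_Q−1} ( ∑_{i=j+1}^{j+r_Q−l_Q} σ_Q(i)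 )·t^j ), where (1−t)⁻¹ and (1−t^{r_Q})⁻¹ denote the inverses of these units in ℚ⟦t⟧. -/
/-
Put `A = (r² − 1)/(12r)` and `τ = σ − A`. Since `b` is a unit mod `r`, `i ↦ [b i]` permutes a
period, so `∑_{0 ≤ i < r} σ(i) = ∑_{k < r} k(r − k)/(2r) = rA`: thus `τ` is `r`-periodic, even and
of mean zero. Then `c(m) = ∑_{0 ≤ i < [m]} τ(i)` is a primitive of `τ` on all of `ℤ`, and
`c(l − n) − c(−n) = c(l − n − r) − c(−n) = −∑_{l−n−r ≤ i < −n} τ(i) = −∑_{n < i ≤ n+r−l} τ(i)`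
by evenness. So the `n`-th coefficient is `(r − l)A − s(n)` with `s(n) = ∑_{i=n+1}^{n+r−l} σ(i)`
`r`-periodic, and an `r`-periodic sequence has generating function `(1 − tʳ)⁻¹ ∑_{j<r} s(j) tʲ`.
-/

open PowerSeries Finset Function

theorem Int.sum_Ico_sub {M : Type*} [AddCommGroup M] (F : ℤ → M) {a b : ℤ} (hab : a ≤ b) :
    ∑ i ∈ Ico a b, (F (i + 1) - F i) = F b - F a := by
  induction b, hab using Int.leInduction with
  | base => simp
  | succ b hab ih =>
    rw [← Order.succ_eq_add_one, ← insert_Ico_right_eq_Ico_succ hab, sum_insert (by simp), ih,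
      Order.succ_eq_add_one]
    abel

theorem sum_Ico_mul_sub (n : ℕ) :
    ∑ i ∈ Ico (0 : ℤ) n, (i : ℚ) * (n - i) = n * ((n : ℚ) ^ 2 - 1) / 6 := by
  let F : ℤ → ℚ := fun i => i * (i - 1) * (3 * n - 2 * i + 1) / 6
  calc ∑ i ∈ Ico (0 : ℤ) n, (i : ℚ) * (n - i)
      = ∑ i ∈ Ico (0 : ℤ) n, (F (i + 1) - F i) := by
        refine sum_congr rfl fun i _ => ?_
        simp only [F]
        push_cast
        ring
    _ = n * ((n : ℚ) ^ 2 - 1) / 6 := by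
      rw [Int.sum_Ico_sub F (Int.natCast_nonneg n)]
      simp only [F]
      push_cast
      ring

theorem Function.Periodic.map_emod {α : Type*} {f : ℤ → α} {r : ℤ} (hf : Periodic f r) (m : ℤ) :
    f (m % r) = f m := by
  rw [Int.emod_def, mul_comm]
  simpa using hf.sub_int_mul_eq (m / r) (x := m)

section PeriodicPartialSum

variable {M : Type*} [AddCommGroup M]

noncomputable def periodicPartialSum (τ : ℤ → M) (r m : ℤ) : M := ∑ i ∈ Ico 0 (m % r), τ i

variable {τ : ℤ → M} {r : ℤ}

theorem periodicPartialSum_sub_period (m : ℤ) :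
    periodicPartialSum τ r (m - r) = periodicPartialSum τ r m := by
  simp [periodicPartialSum]

theorem periodicPartialSum_add_one (hr : 0 < r) (hτ : Periodic τ r)
    (hsum : ∑ i ∈ Ico 0 r, τ i = 0) (m : ℤ) :
    periodicPartialSum τ r (m + 1) = periodicPartialSum τ r m + τ m := by
  have h0 : 0 ≤ m % r := Int.emod_nonneg m hr.ne'
  have hlt : m % r < r := Int.emod_lt_of_pos m hr
  have hstep : periodicPartialSum τ r m + τ m = ∑ i ∈ Ico 0 (m % r + 1), τ i := by
    rw [periodicPartialSum, ← hτ.map_emod, ← Order.succ_eq_add_one,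
      ← insert_Ico_right_eq_Ico_succ h0, sum_insert (by simp), add_comm]
  rw [hstep, periodicPartialSum, ← Int.emod_add_emod]
  rcases (show m % r + 1 < r ∨ m % r + 1 = r by omega) with hlt' | heq
  · rw [Int.emod_eq_of_lt (by omega) hlt']
  · rw [heq, Int.emod_self, hsum, Ico_self, sum_empty]

theorem sum_Ico_eq_periodicPartialSum_sub (hr : 0 < r) (hτ : Periodic τ r)
    (hsum : ∑ i ∈ Ico 0 r, τ i = 0) {a b : ℤ} (hab : a ≤ b) :
    ∑ i ∈ Ico a b, τ i = periodicPartialSum τ r b - periodicPartialSum τ r a := by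
  rw [← Int.sum_Ico_sub _ hab]
  refine sum_congr rfl fun i _ => ?_
  rw [periodicPartialSum_add_one hr hτ hsum, add_sub_cancel_left]

theorem Function.Even.sum_Ico_eq_sum_Ioc_neg (hτ : Function.Even τ) (a b : ℤ) :
    ∑ i ∈ Ico a b, τ i = ∑ i ∈ Ioc (-b) (-a), τ i := by
  refine sum_nbij' Neg.neg Neg.neg ?_ ?_ (fun _ _ => neg_neg _) (fun _ _ => neg_neg _)
    fun i _ => (hτ i).symm
  · intro i hi; simp only [mem_Ico, mem_Ioc] at hi ⊢; omega
  · intro i hi; simp only [mem_Ico, mem_Ioc] at hi ⊢; omega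

theorem periodicPartialSum_sub_sub_neg (hr : 0 < r) (hτ : Periodic τ r) (hτ' : Function.Even τ)
    (hsum : ∑ i ∈ Ico 0 r, τ i = 0) {l : ℤ} (hl : l ≤ r) (n : ℤ) :
    periodicPartialSum τ r (l - n) - periodicPartialSum τ r (-n)
      = -∑ i ∈ Ioc n (n + r - l), τ i := by
  rw [← periodicPartialSum_sub_period (l - n), ← neg_sub,
    ← sum_Ico_eq_periodicPartialSum_sub hr hτ hsum (by omega), hτ'.sum_Ico_eq_sum_Ioc_neg]
  congr 3 <;> ring

theorem periodicPartialSum_sub_const {σ : ℤ → M} (hr : 0 < r) (hσ0 : σ 0 = 0) (A : M) (m : ℤ) :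
    periodicPartialSum (fun i => σ i - A) r m
      = -(m % r) • A + ∑ i ∈ Icc 1 (m % r - 1), σ i := by
  have h0 : 0 ≤ m % r := Int.emod_nonneg m hr.ne'
  have hsub : ∑ i ∈ Icc 1 (m % r - 1), σ i = ∑ i ∈ Ico 0 (m % r), σ i := by
    refine sum_subset (fun i hi => by simp only [mem_Icc, mem_Ico] at hi ⊢; omega)
      fun i hi hi' => ?_
    simp only [mem_Icc, mem_Ico] at hi hi'
    rw [show i = 0 by omega, hσ0]
  rw [periodicPartialSum, sum_sub_distrib, sum_const, Int.card_Ico, sub_zero, hsub,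
    ← natCast_zsmul, Int.toNat_of_nonneg h0, neg_zsmul, neg_add_eq_sub]

end PeriodicPartialSum

namespace PowerSeries

theorem mk_mul_one_sub_X_pow_of_periodic {R : Type*} [CommRing R] {r : ℕ} {s : ℕ → R}
    (hs : Periodic s r) : mk s * (1 - X ^ r) = ∑ j ∈ range r, C (s j) * X ^ j := by
  ext n
  rw [mul_sub, mul_one, map_sub, coeff_mul_X_pow', coeff_mk, map_sum]
  simp only [coeff_C_mul_X_pow, sum_ite_eq, mem_range]
  by_cases hn : n < r
  · simp [hn, not_le.mpr hn]
  · rw [if_pos (not_lt.mp hn), if_neg hn, coeff_mk, ← hs (n - r), Nat.sub_add_cancel (not_lt.mp hn),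
      sub_self]

theorem mk_eq_inv_mul_of_periodic {k : Type*} [Field k] {r : ℕ} (hr : 0 < r) {s : ℕ → k}
    (hs : Periodic s r) : mk s = (1 - X ^ r)⁻¹ * ∑ j ∈ range r, C (s j) * X ^ j := by
  rw [mul_comm, eq_mul_inv_iff_mul_eq (by simp [hr.ne']), mk_mul_one_sub_X_pow_of_periodic hs]

theorem mk_const_sub_of_periodic {k : Type*} [Field k] {r : ℕ} (hr : 0 < r) {s : ℕ → k}
    (hs : Periodic s r) (g : k) :
    mk (fun n => g - s n)
      = C g * (1 - X)⁻¹ - (1 - X ^ r)⁻¹ * ∑ j ∈ range r, C (s j) * X ^ j := by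
  have hconst : mk (fun _ => g) = C g * (1 - X)⁻¹ := by
    simpa [mul_comm] using mk_eq_inv_mul_of_periodic one_pos (s := fun _ => g) fun _ => rfl
  rw [← hconst, ← mk_eq_inv_mul_of_periodic hr hs]
  ext n
  simp

end PowerSeries

theorem mk_periodicPartialSum_sub_sub_neg {k : Type*} [Field k] {r : ℕ} (hr : 0 < r)
    {σ : ℤ → k} (hσ : Periodic σ r) (hσ' : Function.Even σ) {A : k}
    (hsum : ∑ i ∈ Ico (0 : ℤ) r, σ i = r * A) {l : ℤ} (hl : l ≤ r) :
    mk (fun n : ℕ => periodicPartialSum (fun i => σ i - A) r (l - n)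
        - periodicPartialSum (fun i => σ i - A) r (-n))
      = C ((r - l) * A) * (1 - X)⁻¹
        - (1 - X ^ r)⁻¹ * ∑ j ∈ range r, C (∑ i ∈ Icc ((j : ℤ) + 1) (j + r - l), σ i) * X ^ j := by
  have hr' : (0 : ℤ) < r := by exact_mod_cast hr
  have hτsum : ∑ i ∈ Ico (0 : ℤ) r, (σ i - A) = 0 := by
    rw [sum_sub_distrib, hsum, sum_const, Int.card_Ico, sub_zero, Int.toNat_natCast, nsmul_eq_mul,
      sub_self]
  have hcoeff (n : ℤ) : periodicPartialSum (fun i => σ i - A) r (l - n)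
      - periodicPartialSum (fun i => σ i - A) r (-n)
        = (r - l) * A - ∑ i ∈ Icc (n + 1) (n + r - l), σ i := by
    rw [periodicPartialSum_sub_sub_neg hr' (fun i => congrArg (· - A) (hσ i))
      (fun i => congrArg (· - A) (hσ' i)) hτsum hl, sum_sub_distrib, sum_const, Int.card_Ioc,
      nsmul_eq_mul, ← Order.succ_eq_add_one, Icc_succ_left_eq_Ioc]
    have hcard : ((n + r - l - n).toNat : k) = r - l := by
      rw [← Int.cast_natCast, Int.toNat_of_nonneg (by omega)]
      push_cast
      ring
    rw [hcard]
    ring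
  have hper : Periodic (fun n : ℕ => ∑ i ∈ Icc ((n : ℤ) + 1) (n + r - l), σ i) r := by
    intro n
    dsimp only
    rw [show Icc ((↑(n + r) : ℤ) + 1) (↑(n + r) + r - l)
        = (Icc ((n : ℤ) + 1) (n + r - l)).map (addRightEmbedding (r : ℤ)) by
      rw [map_add_right_Icc]; congr 1 <;> push_cast <;> ring, sum_map]
    exact sum_congr rfl fun i _ => hσ i
  simp_rw [hcoeff]
  exact mk_const_sub_of_periodic hr hper _

theorem sum_Ico_intCast_zmod {r : ℕ} [NeZero r] {M : Type*} [AddCommMonoid M] (F : ZMod r → M) :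
    ∑ i ∈ Ico (0 : ℤ) r, F i = ∑ x, F x := by
  refine sum_nbij' (fun i => (i : ZMod r)) (fun x => (x.val : ℤ)) (by simp) ?_ ?_ (by simp)
    (fun _ _ => rfl)
  · intro x _
    simp only [mem_Ico]
    exact ⟨by positivity, by exact_mod_cast ZMod.val_lt x⟩
  · intro i hi
    simp only [mem_Ico] at hi
    rw [ZMod.val_intCast, Int.emod_eq_of_lt hi.1 hi.2]

section ParabolicWeight

noncomputable def parabolicWeight (r : ℕ) (x : ZMod r) : ℚ := x.val * (r - x.val) / (2 * r)

variable {r : ℕ}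

theorem Function.Periodic.parabolicWeight_mul (b : ZMod r) :
    Periodic (fun i : ℤ => parabolicWeight r (b * i)) r := by
  intro i
  simp

variable [NeZero r]

theorem parabolicWeight_intCast (a : ℤ) :
    parabolicWeight r a = ((a % r : ℤ) : ℚ) * (r - ((a % r : ℤ) : ℚ)) / (2 * r) := by
  rw [parabolicWeight, ← ZMod.val_intCast, Int.cast_natCast]

theorem parabolicWeight_neg (x : ZMod r) : parabolicWeight r (-x) = parabolicWeight r x := by
  rw [parabolicWeight, parabolicWeight, ZMod.neg_val]
  split_ifs with hx
  · simp [hx]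
  · rw [Nat.cast_sub (ZMod.val_le x)]
    ring

theorem Function.Even.parabolicWeight_mul (b : ZMod r) :
    Function.Even (fun i : ℤ => parabolicWeight r (b * i)) := by
  intro i
  simp only [Int.cast_neg, mul_neg, parabolicWeight_neg]

theorem sum_parabolicWeight : ∑ x : ZMod r, parabolicWeight r x = ((r : ℚ) ^ 2 - 1) / 12 := by
  have hr : (r : ℚ) ≠ 0 := NeZero.ne _
  rw [← sum_Ico_intCast_zmod]
  calc ∑ i ∈ Ico (0 : ℤ) r, parabolicWeight r i
      = (∑ i ∈ Ico (0 : ℤ) r, (i : ℚ) * (r - i)) / (2 * r) := by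
        rw [sum_div]
        refine sum_congr rfl fun i hi => ?_
        rw [mem_Ico] at hi
        rw [parabolicWeight_intCast, Int.emod_eq_of_lt hi.1 hi.2]
    _ = ((r : ℚ) ^ 2 - 1) / 12 := by
        rw [sum_Ico_mul_sub]
        field_simp
        ring

theorem sum_parabolicWeight_mul {u : ZMod r} (hu : IsUnit u) :
    ∑ x : ZMod r, parabolicWeight r (u * x) = ((r : ℚ) ^ 2 - 1) / 12 := by
  rw [Fintype.sum_bijective _ (IsUnit.isUnit_iff_mulLeft_bijective.mp hu) _ (parabolicWeight r)
    fun _ => rfl, sum_parabolicWeight]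

theorem sum_Ico_parabolicWeight_mul {b : ZMod r} (hb : IsUnit b) :
    ∑ i ∈ Ico (0 : ℤ) r, parabolicWeight r (b * i) = r * (((r : ℚ) ^ 2 - 1) / (12 * r)) := by
  rw [sum_Ico_intCast_zmod (fun x => parabolicWeight r (b * x)), sum_parabolicWeight_mul hb]
  field_simp [NeZero.ne (r : ℚ)]

end ParabolicWeight

theorem torsion_hilbert_series_identity_general {ι : Type*} [Fintype ι]
    (r : ι → ℕ) (hr : ∀ q, 2 ≤ r q) (b l : ι → ℤ)
    (hb : ∀ q, IsCoprime (b q) ((r q : ℤ)))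
    (hl1 : ∀ q, l q ≤ (r q : ℤ) - 1)
    (σ : ι → ℤ → ℚ)
    (hσ : ∀ q (i : ℤ), σ q i =
      (((b q * i) % (r q : ℤ) : ℤ) : ℚ)
        * ((r q : ℚ) - (((b q * i) % (r q : ℤ) : ℤ) : ℚ)) / (2 * r q))
    (c : ι → ℤ → ℚ)
    (hc : ∀ q (m : ℤ), c q m =
      -((m % (r q : ℤ) : ℤ) : ℚ) * ((r q : ℚ) ^ 2 - 1) / (12 * r q)
        + ∑ j ∈ Finset.Icc (1 : ℤ) (m % (r q : ℤ) - 1), σ q j) :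
    PowerSeries.mk (fun n : ℕ => ∑ q, (c q (l q - n) - c q (-(n : ℤ))))
      = ∑ q, (PowerSeries.C (((r q : ℚ) - l q) * ((r q : ℚ) ^ 2 - 1) / (12 * r q))
            * (1 - X)⁻¹
          - (1 - X ^ (r q))⁻¹
            * ∑ j ∈ Finset.range (r q),
                PowerSeries.C (∑ i ∈ Finset.Icc ((j : ℤ) + 1) ((j : ℤ) + r q - l q), σ q i)
                  * (X : PowerSeries ℚ) ^ j) := by
  have hsplit : mk (fun n : ℕ => ∑ q, (c q (l q - n) - c q (-(n : ℤ))))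
      = ∑ q, mk (fun n : ℕ => c q (l q - n) - c q (-(n : ℤ))) := by
    ext
    simp
  rw [hsplit]
  refine sum_congr rfl fun q _ => ?_
  have hr0 : 0 < r q := by linarith [hr q]
  have : NeZero (r q) := ⟨hr0.ne'⟩
  have hσq : σ q = fun i : ℤ => parabolicWeight (r q) ((b q : ZMod (r q)) * i) := by
    ext i
    rw [hσ, ← Int.cast_mul, parabolicWeight_intCast]
  have hcq :
      c q = periodicPartialSum (fun i => σ q i - ((r q : ℚ) ^ 2 - 1) / (12 * r q)) (r q) := by
    ext m
    rw [hc, periodicPartialSum_sub_const (by exact_mod_cast hr0) (by simp [hσq, parabolicWeight]),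
      zsmul_eq_mul]
    push_cast
    ring
  rw [hcq, mul_div_assoc, hσq]
  exact mk_periodicPartialSum_sub_sub_neg hr0 (.parabolicWeight_mul _) (.parabolicWeight_mul _)
    (sum_Ico_parabolicWeight_mul ((ZMod.coe_int_isUnit_iff_isCoprime _ _).mpr (hb q).symm))
    (by linarith [hl1 q])

/-- Lemma 3.2 of the paper (arithmetic content).  For a finite family of singularity data
`(r_Q, b_Q, l_Q)` with `r_Q ≥ 2`, `gcd(b_Q, r_Q) = 1`, `0 ≤ l_Q ≤ r_Q − 1`, and Orbifold
Riemann–Roch contributions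
`c_Q(m) = −[m]_{r_Q}·(r_Q²−1)/(12r_Q) + ∑_{j=1}^{[m]_{r_Q}−1} σ_Q(j)` where
`σ_Q(i) = [b_Q·i]_{r_Q}·(r_Q−[b_Q·i]_{r_Q})/(2r_Q)`, one has in `ℚ⟦t⟧`:
`∑_{n≥0} (∑_Q (c_Q(l_Q−n) − c_Q(−n)))·tⁿ
 = ∑_Q ((r_Q−l_Q)(r_Q²−1)/(12r_Q)·(1−t)⁻¹
        − (1−t^{r_Q})⁻¹·∑_{j=0}^{r_Q−1} (∑_{i=j+1}^{j+r_Q−l_Q} σ_Q(i))·t^j)`. -/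
theorem torsion_hilbert_series_identity {ι : Type*} [Fintype ι]
    (r : ι → ℕ) (hr : ∀ q, 2 ≤ r q) (b l : ι → ℤ)
    (hb : ∀ q, IsCoprime (b q) ((r q : ℤ)))
    (hl0 : ∀ q, 0 ≤ l q) (hl1 : ∀ q, l q ≤ (r q : ℤ) - 1)
    (σ : ι → ℤ → ℚ)
    (hσ : ∀ q (i : ℤ), σ q i =
      (((b q * i) % (r q : ℤ) : ℤ) : ℚ)
        * ((r q : ℚ) - (((b q * i) % (r q : ℤ) : ℤ) : ℚ)) / (2 * r q))
    (c : ι → ℤ → ℚ)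
    (hc : ∀ q (m : ℤ), c q m =
      -((m % (r q : ℤ) : ℤ) : ℚ) * ((r q : ℚ) ^ 2 - 1) / (12 * r q)
        + ∑ j ∈ Finset.Icc (1 : ℤ) (m % (r q : ℤ) - 1), σ q j) :
    PowerSeries.mk (fun n : ℕ => ∑ q, (c q (l q - n) - c q (-(n : ℤ))))
      = ∑ q, (PowerSeries.C (((r q : ℚ) - l q) * ((r q : ℚ) ^ 2 - 1) / (12 * r q))
            * (1 - X)⁻¹
          - (1 - X ^ (r q))⁻¹
            * ∑ j ∈ Finset.range (r q),
                PowerSeries.C (∑ i ∈ Finset.Icc ((j : ℤ) + 1) ((j : ℤ) + r q - l q), σ q i)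
                  * (X : PowerSeries ℚ) ^ j) :=
  torsion_hilbert_series_identity_general r hr b l hb hl1 σ hσ c hc
end

section
/- Let r ≥ 2 be an integer and b an integer coprime to r, and write σ(i) = [b·i]_r·(r − [b·i]_r)/(2r) ∈ ℚ. Then in ℚ⟦t⟧: ∑_{n≥0} ( −n·(r²−1)/(12r) − [−n]_r·(r²−1)/(12r) + ∑_{j=1}^{[−n]_r − 1} σ(j) )·t^n = −(1−t)⁻¹·(1−t^r)⁻¹·∑_{i=1}^{r−1} σ(i)·t^i, where (1−t)⁻¹ and (1−t^r)⁻¹ denote the inverses of these units in ℚ⟦t⟧. -/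
/-!
Let `T = ∑_{j=1}^{r-1} σ(j)`. Since `σ` is even and `r`-periodic with `σ(0) = 0`, the `n`-th
coefficient on the left is `-(σ(0) + ⋯ + σ(n))`: both vanish at `n = 0` and drop by `σ(n+1)` from
`n` to `n + 1`, where the jump of `[-n]_r` from `0` to `r - 1` is compensated by
`T = (r² - 1)/12`; this value of `T` holds because `j ↦ [bj]_r` permutes the residues.
Multiplying the series of partial sums by `1 - X` gives the series of `σ`, and multiplying an
`r`-periodic series by `1 - X^r` leaves its first period.
-/

open PowerSeries Finset

namespace PowerSeries

variable {R : Type*} [Ring R]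

theorem one_sub_X_mul_mk_sum_range (a : ℕ → R) :
    (1 - X) * mk (fun n => ∑ i ∈ range (n + 1), a i) = mk a := by
  ext (_ | n) <;> simp [sub_mul, coeff_succ_X_mul, sum_range_succ]

theorem one_sub_X_pow_mul_mk_of_periodic {a : ℕ → R} {r : ℕ} (ha : Function.Periodic a r) :
    (1 - X ^ r) * mk a = ∑ i ∈ range r, C (a i) * X ^ i := by
  have hsplit := eq_X_pow_mul_shift_add_trunc r (mk a)
  simp only [coeff_mk, ha.funext] at hsplit
  rw [sub_mul, one_mul, sub_eq_iff_eq_add']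
  nth_rw 1 [hsplit]
  rw [trunc_apply, ← range_eq_Ico, ← Polynomial.coeToPowerSeries.ringHom_apply, map_sum]
  simp only [Polynomial.coeToPowerSeries.ringHom_apply, Polynomial.coe_monomial,
    monomial_eq_C_mul_X_pow, coeff_mk]

end PowerSeries

theorem Function.Periodic.apply_emod {α : Type*} {f : ℤ → α} {r : ℤ}
    (h : Function.Periodic f r) (x : ℤ) : f (x % r) = f x := by
  simpa [Int.emod_def, mul_comm] using h.sub_int_mul_eq (x / r)

namespace Int

theorem mul_emod_mul_emod_of_modEq_one {r u b j : ℤ} (h : u * b ≡ 1 [ZMOD r]) (hj₀ : 0 ≤ j)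
    (hjr : j < r) : u * (b * j % r) % r = j := by
  have : u * (b * j % r) ≡ j [ZMOD r] := calc
    u * (b * j % r) ≡ u * (b * j) [ZMOD r] := (Int.mod_modEq _ _).mul_left u
    _ = u * b * j := by ring
    _ ≡ 1 * j [ZMOD r] := h.mul_right j
    _ = j := one_mul j
  rw [this, Int.emod_eq_of_lt hj₀ hjr]

theorem sum_Ico_emod_mul {M : Type*} [AddCommMonoid M] (f : ℤ → M) {r b : ℤ}
    (hb : IsCoprime b r) (hr : 0 < r) :
    ∑ j ∈ Ico 0 r, f (b * j % r) = ∑ j ∈ Ico 0 r, f j := by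
  obtain ⟨u, v, huv⟩ := hb
  have hub : u * b ≡ 1 [ZMOD r] := Int.modEq_iff_dvd.mpr ⟨v, by linarith⟩
  have hbu : b * u ≡ 1 [ZMOD r] := mul_comm u b ▸ hub
  have hmem : ∀ c j : ℤ, c * j % r ∈ Ico 0 r := fun c j =>
    mem_Ico.mpr ⟨Int.emod_nonneg _ hr.ne', Int.emod_lt_of_pos _ hr⟩
  refine sum_nbij' (fun j => b * j % r) (fun k => u * k % r) (fun j _ => hmem b j)
    (fun k _ => hmem u k) (fun j hj => ?_) (fun k hk => ?_) (fun _ _ => rfl)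
  · exact mul_emod_mul_emod_of_modEq_one hub (mem_Ico.mp hj).1 (mem_Ico.mp hj).2
  · exact mul_emod_mul_emod_of_modEq_one hbu (mem_Ico.mp hk).1 (mem_Ico.mp hk).2

end Int

theorem sum_range_mul_sub {R : Type*} [CommRing R] (c : R) (N : ℕ) :
    6 * ∑ i ∈ range N, (i : R) * (c - i) = 3 * c * N * (N - 1) - (N - 1) * N * (2 * N - 1) := by
  induction N with
  | zero => simp
  | succ N ih => rw [sum_range_succ, mul_add, ih]; push_cast; ring

theorem sum_Ico_one_add_one {M : Type*} [AddCommMonoid M] {σ : ℤ → M} (h0 : σ 0 = 0) {m : ℤ}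
    (hm : 0 ≤ m) : ∑ j ∈ Ico 1 (m + 1), σ j = ∑ j ∈ Ico 1 m, σ j + σ m := by
  rcases hm.eq_or_lt with rfl | hm
  · simp [h0]
  · rw [← insert_Ico_right_eq_Ico_add_one hm, sum_insert right_notMem_Ico, add_comm]

section PartialSums

variable {K : Type*} [Field K] [CharZero K] {σ : ℤ → K} {r : ℕ}

theorem sum_Ico_one_emod_sub_eq_of_le (hr : 0 < r) {m : ℤ} (hm₀ : 0 ≤ m) (hmr : m ≤ r) :
    ∑ j ∈ Ico 1 (m % r), σ j - ((m % r : ℤ) : K) / r * ∑ j ∈ Ico 1 (r : ℤ), σ j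
      = ∑ j ∈ Ico 1 m, σ j - (m : K) / r * ∑ j ∈ Ico 1 (r : ℤ), σ j := by
  rcases hmr.lt_or_eq with hmr | rfl
  · rw [Int.emod_eq_of_lt hm₀ hmr]
  · have : (r : K) ≠ 0 := Nat.cast_ne_zero.mpr hr.ne'
    simp [this]

theorem sum_Ico_one_neg_emod_sub_eq_neg_sum_range (hr : 0 < r)
    (hper : Function.Periodic σ r) (heven : σ.Even) (h0 : σ 0 = 0) (n : ℕ) :
    ∑ j ∈ Ico 1 (-(n : ℤ) % r), σ j
        - ((n + (-(n : ℤ) % r) : ℤ) : K) / r * ∑ j ∈ Ico 1 (r : ℤ), σ j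
      = -∑ i ∈ range (n + 1), σ i := by
  induction n with
  | zero => simp [h0]
  | succ n ih =>
    set k := -((n + 1 : ℕ) : ℤ) % r with hk
    have hk₀ : 0 ≤ k := Int.emod_nonneg _ (by omega)
    have hkr : k < r := Int.emod_lt_of_pos _ (by omega)
    have hprev : -(n : ℤ) % r = (k + 1) % r := by
      rw [hk, Int.emod_add_emod]; congr 1; push_cast; ring
    have hσk : σ k = σ (n + 1) := by
      rw [hk, hper.apply_emod, heven]; push_cast; rfl
    have hwrap := sum_Ico_one_emod_sub_eq_of_le (σ := σ) hr (by omega : 0 ≤ k + 1) (by omega)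
    rw [hprev] at ih
    rw [sum_Ico_one_add_one h0 hk₀] at hwrap
    rw [sum_range_succ]
    push_cast at ih hwrap ⊢
    linear_combination ih - hwrap - hσk

end PartialSums

-- `[x]_r (r - [x]_r) / 2r`, the summand of Reid's plurigenus formula.
def reidWeight (r : ℕ) (x : ℤ) : ℚ :=
  ((x % (r : ℤ) : ℤ) : ℚ) * ((r : ℚ) - ((x % (r : ℤ) : ℤ) : ℚ)) / (2 * r)

@[simp]
theorem reidWeight_zero (r : ℕ) : reidWeight r 0 = 0 := by simp [reidWeight]

theorem reidWeight_emod (r : ℕ) (x : ℤ) : reidWeight r (x % r) = reidWeight r x := by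
  rw [reidWeight, reidWeight, Int.emod_emod]

theorem reidWeight_neg (r : ℕ) (x : ℤ) : reidWeight r (-x) = reidWeight r x := by
  unfold reidWeight
  rw [Int.neg_emod]
  split_ifs with h
  · simp [Int.emod_eq_zero_of_dvd h]
  · rw [Int.natAbs_natCast]; push_cast; ring

theorem reidWeight_mul_periodic (r : ℕ) (b : ℤ) :
    Function.Periodic (fun i => reidWeight r (b * i)) r := fun i => by
  dsimp only
  rw [← reidWeight_emod, mul_add, mul_comm b (r : ℤ), Int.add_mul_emod_self_left,
    reidWeight_emod]

theorem reidWeight_mul_even (r : ℕ) (b : ℤ) : Function.Even fun i => reidWeight r (b * i) :=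
  fun i => by simp only [mul_neg, reidWeight_neg]

theorem sum_Ico_reidWeight {r : ℕ} (hr : 0 < r) :
    ∑ x ∈ Ico (0 : ℤ) r, reidWeight r x = ((r : ℚ) ^ 2 - 1) / 12 := by
  rw [Int.Ico_eq_finset_map, sum_map]
  simp only [Function.Embedding.trans_apply, Nat.castEmbedding_apply, addLeftEmbedding_apply,
    zero_add, sub_zero, Int.toNat_natCast]
  have hterm : ∀ i ∈ range r, reidWeight r i = (i : ℚ) * (r - i) / (2 * r) := by
    intro i hi
    rw [reidWeight, Int.emod_eq_of_lt (by positivity) (by simpa using hi)]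
    push_cast; rfl
  rw [sum_congr rfl hterm, ← sum_div, div_eq_iff (by positivity)]
  linear_combination sum_range_mul_sub (r : ℚ) r / 6

theorem sum_Ico_one_reidWeight_mul {r : ℕ} {b : ℤ} (hb : IsCoprime b r) (hr : 0 < r) :
    ∑ j ∈ Ico (1 : ℤ) r, reidWeight r (b * j) = ((r : ℚ) ^ 2 - 1) / 12 := by
  rw [← sum_Ico_reidWeight hr, ← Int.sum_Ico_emod_mul _ hb (by omega),
    ← insert_Ico_add_one_left_eq_Ico (by omega : (0 : ℤ) < r), sum_insert (by simp), zero_add]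
  simp [reidWeight_emod]

/-- Per-singularity content of Altınok's Hilbert series formula.  For `r ≥ 2`, `b` coprime
to `r`, and `σ(i) = [b·i]_r·(r−[b·i]_r)/(2r) ∈ ℚ`, one has in `ℚ⟦t⟧`:
`∑_{n≥0} (−n·(r²−1)/(12r) − [−n]_r·(r²−1)/(12r) + ∑_{j=1}^{[−n]_r−1} σ(j))·tⁿ
   = −(1−t)⁻¹·(1−t^r)⁻¹·∑_{i=1}^{r−1} σ(i)·t^i`. -/
theorem single_singularity_altinok_identity (r : ℕ) (hr : 2 ≤ r) (b : ℤ)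
    (hb : IsCoprime b (r : ℤ))
    (σ : ℤ → ℚ)
    (hσ : ∀ i : ℤ, σ i =
      (((b * i) % (r : ℤ) : ℤ) : ℚ) * ((r : ℚ) - (((b * i) % (r : ℤ) : ℤ) : ℚ)) / (2 * r)) :
    PowerSeries.mk (fun n : ℕ =>
        -(n : ℚ) * ((r : ℚ) ^ 2 - 1) / (12 * r)
          - ((((-(n : ℤ)) % (r : ℤ)) : ℤ) : ℚ) * ((r : ℚ) ^ 2 - 1) / (12 * r)
          + ∑ j ∈ Finset.Icc (1 : ℤ) ((-(n : ℤ)) % (r : ℤ) - 1), σ j)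
      = -((1 - X)⁻¹ * (1 - X ^ r)⁻¹
          * ∑ i ∈ Finset.Icc 1 (r - 1), PowerSeries.C (σ (i : ℤ)) * (X : PowerSeries ℚ) ^ i) := by
  obtain rfl : σ = fun i => reidWeight r (b * i) := funext hσ
  have hr₀ : 0 < r := by omega
  have hper := reidWeight_mul_periodic r b
  set F := mk fun n => ∑ i ∈ range (n + 1), reidWeight r (b * i)
  have hP : (1 - X ^ r) * ((1 - X) * F)
      = ∑ i ∈ Icc 1 (r - 1), C (reidWeight r (b * i)) * (X : PowerSeries ℚ) ^ i := by
    rw [one_sub_X_mul_mk_sum_range,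
      one_sub_X_pow_mul_mk_of_periodic (fun n => by simpa using hper n),
      sum_range_eq_add_Ico _ hr₀, ← Ico_add_one_right_eq_Icc, Nat.sub_one_add_one hr₀.ne']
    simp
  have hinv₁ : (1 - X : PowerSeries ℚ)⁻¹ * (1 - X) = 1 :=
    PowerSeries.inv_mul_cancel _ (by simp)
  have hinv₂ : (1 - X ^ r : PowerSeries ℚ)⁻¹ * (1 - X ^ r) = 1 :=
    PowerSeries.inv_mul_cancel _ (by simp [zero_pow hr₀.ne'])
  trans -F
  · ext n
    rw [coeff_mk, map_neg, coeff_mk, ← sum_Ico_one_neg_emod_sub_eq_neg_sum_range hr₀ hper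
        (reidWeight_mul_even r b) (by simp) n,
      sum_Ico_one_reidWeight_mul hb hr₀, Icc_sub_one_right_eq_Ico]
    push_cast
    ring
  · rw [← hP, neg_inj]
    linear_combination (-((1 - X : PowerSeries ℚ)⁻¹ * (1 - X)) * F) * hinv₂ - F * hinv₁
end
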